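/- For every valid configuration c, the set of reachable trees D(c) is nonempty; in particular F1(c) = max over t' ∈ D(c) of F1(t') is well defined. -/

import Mathlib

/-!
Formalization of the span-based Structure/Label transition parsing system of
Cross & Huang (2016), "Span-Based Constituency Parsing with a Structure-Label
System and Provably Optimal Dynamic Oracles".

A configuration is `(z, σ, t)` where `z` is the step number, `σ` the stack of
span boundaries and `t` the set of brackets built so far.  A bracket is a
triple `(X, i, j)` with `X` a nonterminal label and `i < j ≤ n` a span.
-/

namespace SpanParser

structure Config (N : Type*) where
  z : ℕ
  σ : List ℕ
  t : Finset (N × ℕ × ℕ)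

variable {N : Type*}

/-- The span of a bracket. -/
def span (b : N × ℕ × ℕ) : ℕ × ℕ := b.2

/-- Top (rightmost) boundary of the stack. -/
def topJ (σ : List ℕ) : ℕ := σ.getLastD 0

/-- Second-to-top boundary of the stack. -/
def topI (σ : List ℕ) : ℕ := σ.dropLast.getLastD 0

/-- Parser actions: shift, combine, label-`X`, and nolabel. -/
inductive Action (N : Type*) where
  | sh : Action N
  | comb : Action N
  | label : N → Action N
  | nolabel : Action N

variable [DecidableEq N]

/-- Applicability of an action at a configuration (for sentence length `n`). -/
def App (n : ℕ) (c : Config N) : Action N → Prop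
  | .sh      => Even c.z ∧ c.σ ≠ [] ∧ topJ c.σ < n
  | .comb    => Even c.z ∧ 3 ≤ c.σ.length
  | .label _ => Odd c.z ∧ 2 ≤ c.σ.length
  | .nolabel => Odd c.z ∧ 2 ≤ c.σ.length ∧ c.z < 4 * n - 1

/-- The result `τ(c)` of applying action `τ` to configuration `c`. -/
def doAct (c : Config N) : Action N → Config N
  | .sh      => ⟨c.z + 1, c.σ ++ [topJ c.σ + 1], c.t⟩
  | .comb    => ⟨c.z + 1, c.σ.dropLast.dropLast ++ [topJ c.σ], c.t⟩
  | .label X => ⟨c.z + 1, c.σ, insert (X, topI c.σ, topJ c.σ) c.t⟩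
  | .nolabel => ⟨c.z + 1, c.σ, c.t⟩

/-- The initial configuration `(0, [0], ∅)`. -/
def initial (N : Type*) : Config N := ⟨0, [0], ∅⟩

/-- One transition step `c ⊢ c'`. -/
def Step (n : ℕ) (c c' : Config N) : Prop := ∃ a, App n c a ∧ c' = doAct c a

/-- `⊢*`: reflexive-transitive closure of the transition relation. -/
def Reaches (n : ℕ) : Config N → Config N → Prop := Relation.ReflTransGen (Step n)

/-- A configuration is valid if it is reachable from the initial configuration. -/
def Valid (n : ℕ) (c : Config N) : Prop := Reaches n (initial N) c

/-- A final configuration: `σ = [0, n]` and `z = 4n - 2`. -/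
def Final (n : ℕ) (c : Config N) : Prop := c.σ = [0, n] ∧ c.z = 4 * n - 2

/-- `D(c)`: the set of trees of final configurations reachable from `c`. -/
def Dset (n : ℕ) (c : Config N) : Set (Finset (N × ℕ × ℕ)) :=
  {t' | ∃ c', Reaches n c c' ∧ Final n c' ∧ c'.t = t'}

/-- `(i,j) ⪯ (p,q)`: span `(i,j)` is encompassed by `(p,q)`, i.e. `p ≤ i < j ≤ q`. -/
def Enc (s₁ s₂ : ℕ × ℕ) : Prop := s₂.1 ≤ s₁.1 ∧ s₁.1 < s₁.2 ∧ s₁.2 ≤ s₂.2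

/-- `(i,j) ≺ (p,q)`: strict encompassment. -/
def SEnc (s₁ s₂ : ℕ × ℕ) : Prop := Enc s₁ s₂ ∧ s₁ ≠ s₂

/-- `tG` is a gold tree for sentence length `n`: valid spans, pairwise-distinct
spans, pairwise non-crossing spans, and exactly one bracket with span `(0, n)`
(uniqueness follows from distinctness of spans). -/
structure IsGold (n : ℕ) (tG : Finset (N × ℕ × ℕ)) : Prop where
  validSpans : ∀ b ∈ tG, (span b).1 < (span b).2 ∧ (span b).2 ≤ n
  distinctSpans : ∀ b₁ ∈ tG, ∀ b₂ ∈ tG, span b₁ = span b₂ → b₁ = b₂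
  noncrossing : ∀ b₁ ∈ tG, ∀ b₂ ∈ tG,
    Enc (span b₁) (span b₂) ∨ Enc (span b₂) (span b₁) ∨
    (span b₁).2 ≤ (span b₂).1 ∨ (span b₂).2 ≤ (span b₁).1
  root : ∃ X, (X, 0, n) ∈ tG

open Classical in
/-- `left(c)`: gold brackets (strictly, at even steps) encompassing the top
span whose left boundary occurs on the stack. -/
noncomputable def leftSet (tG : Finset (N × ℕ × ℕ)) (c : Config N) :
    Finset (N × ℕ × ℕ) :=
  tG.filter fun b =>
    (if Even c.z then SEnc (topI c.σ, topJ c.σ) (span b)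
     else Enc (topI c.σ, topJ c.σ) (span b)) ∧ (span b).1 ∈ c.σ

open Classical in
/-- `right(c)`: gold brackets entirely on the queue. -/
noncomputable def rightSet (tG : Finset (N × ℕ × ℕ)) (c : Config N) :
    Finset (N × ℕ × ℕ) :=
  tG.filter fun b => topJ c.σ ≤ (span b).1

open Classical in
/-- `reach(c)`: the reachable gold brackets (all of `t_G` at the initial
configuration, whose stack has fewer than two boundaries). -/
noncomputable def reach (tG : Finset (N × ℕ × ℕ)) (c : Config N) :
    Finset (N × ℕ × ℕ) :=
  if c.σ.length < 2 then tG else leftSet tG c ∪ rightSet tG c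

/-- The optimal tree `t*(c) = t ∪ reach(c)`. -/
noncomputable def tstar (tG : Finset (N × ℕ × ℕ)) (c : Config N) :
    Finset (N × ℕ × ℕ) :=
  c.t ∪ reach tG c

/-- `b = next(c)`: the `≺`-minimal element of `left(c)`. -/
def IsNext (tG : Finset (N × ℕ × ℕ)) (c : Config N) (b : N × ℕ × ℕ) : Prop :=
  b ∈ leftSet tG c ∧ ∀ b' ∈ leftSet tG c, Enc (span b) (span b')

/-- The dynamic-oracle policy `dyna(c)` as a predicate on actions. -/
def Dyna (tG : Finset (N × ℕ × ℕ)) (c : Config N) (a : Action N) : Prop :=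
  if c.σ.length < 2 then a = Action.sh
  else if Even c.z then
    ∃ b, IsNext tG c b ∧
      (((span b).1 = topI c.σ ∧ topJ c.σ < (span b).2 ∧ a = Action.sh) ∨
       ((span b).1 < topI c.σ ∧ (span b).2 = topJ c.σ ∧ a = Action.comb) ∨
       ((span b).1 < topI c.σ ∧ topJ c.σ < (span b).2 ∧
          (a = Action.sh ∨ a = Action.comb)))
  else
    (∃ X, (X, topI c.σ, topJ c.σ) ∈ tG ∧ a = Action.label X) ∨
    ((∀ X, (X, topI c.σ, topJ c.σ) ∉ tG) ∧ a = Action.nolabel)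

/-- `F1` of a predicted bracket set `t'` against the gold tree `tG`
(`0` when `t' ∩ tG = ∅`). -/
noncomputable def f1 (tG t' : Finset (N × ℕ × ℕ)) : ℝ :=
  if t' ∩ tG = ∅ then 0
  else
    (2 * (((t' ∩ tG).card : ℝ) / (tG.card : ℝ)) * (((t' ∩ tG).card : ℝ) / (t'.card : ℝ))) /
      ((((t' ∩ tG).card : ℝ) / (tG.card : ℝ)) + (((t' ∩ tG).card : ℝ) / (t'.card : ℝ)))

/-- `F1(c)`: the best `F1` among trees reachable from `c`. -/
noncomputable def configF1 (n : ℕ) (tG : Finset (N × ℕ × ℕ)) (c : Config N) : ℝ :=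
  sSup (f1 tG '' Dset n c)

/-- A run of (applicable) actions from one configuration to another. -/
inductive Run (n : ℕ) : Config N → List (Action N) → Config N → Prop
  | refl (c : Config N) : Run n c [] c
  | step {c c' : Config N} {as : List (Action N)} (a : Action N)
      (happ : App n c a) (h : Run n (doAct c a) as c') : Run n c (a :: as) c'

/-- A run all of whose actions follow the dynamic oracle. -/
inductive DynaRun (n : ℕ) (tG : Finset (N × ℕ × ℕ)) : Config N → Config N → Prop
  | refl (c : Config N) : DynaRun n tG c c
  | step {c c' : Config N} (a : Action N) (happ : App n c a) (hdyna : Dyna tG c a)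
      (h : DynaRun n tG (doAct c a) c') : DynaRun n tG c c'

def isSh : Action N → Bool
  | .sh => true
  | _ => false

def isComb : Action N → Bool
  | .comb => true
  | _ => false

/-- Label-step actions: `label-X` or `nolabel`. -/
def isLabelStep : Action N → Bool
  | .label _ => true
  | .nolabel => true
  | _ => false


/-! The quantity `(z + 1) / 2` counts the structural actions taken so far: `topJ σ` of them
are shifts and `topJ σ + 1 - |σ|` are combines.  This ties the step counter to the stack, so
from any valid configuration the greedy run (shift while input remains, otherwise combine, never
label) is always applicable and ends in a final configuration after at most `4n` steps.  Each
step adds at most one bracket, so the trees in `D(c)` have at most `|t| + 4n` brackets; since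
`F1(t')` depends only on `|t' ∩ tG|` and `|t'|`, it takes finitely many values on `D(c)`. -/

def WellFormed (n : ℕ) (c : Config N) : Prop :=
  (∃ l, c.σ = 0 :: l) ∧ topJ c.σ ≤ n ∧ (c.z + 1) / 2 + c.σ.length = 2 * topJ c.σ + 1

lemma topJ_append_singleton (l : List ℕ) (x : ℕ) : topJ (l ++ [x]) = x :=
  List.getLastD_concat

section Steps

variable {n : ℕ} {c c' : Config N}

lemma Step.z_eq (h : Step n c c') : c'.z = c.z + 1 := by
  obtain ⟨a, -, rfl⟩ := h
  cases a <;> rfl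

lemma Step.card_t_le (h : Step n c c') : c'.t.card ≤ c.t.card + 1 := by
  obtain ⟨a, -, rfl⟩ := h
  cases a with
  | label X => exact Finset.card_insert_le _ _
  | _ => exact Nat.le_succ _

lemma Reaches.card_t_add_z_le (h : Reaches n c c') : c'.t.card + c.z ≤ c.t.card + c'.z := by
  induction h with
  | refl => exact le_rfl
  | tail _ hs ih =>
    have := hs.z_eq
    have := hs.card_t_le
    omega

lemma WellFormed.step (h : WellFormed n c) (hs : Step n c c') : WellFormed n c' := by
  obtain ⟨⟨l, hσ⟩, htop, hcount⟩ := h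
  obtain ⟨a, happ, rfl⟩ := hs
  cases a with
  | sh =>
    obtain ⟨heven, -, hlt⟩ := happ
    have := Nat.even_iff.mp heven
    refine ⟨⟨l ++ [topJ c.σ + 1], by simp [doAct, hσ]⟩, ?_, ?_⟩ <;>
      simp only [doAct, topJ_append_singleton, List.length_append, List.length_singleton] <;>
      omega
  | comb =>
    obtain ⟨heven, hlen⟩ := happ
    have := Nat.even_iff.mp heven
    obtain _ | ⟨x, _ | ⟨y, m⟩⟩ := l
    · simp [hσ] at hlen
    · simp [hσ] at hlen
    refine ⟨⟨(x :: (y :: m).dropLast).dropLast ++ [topJ c.σ], by simp [doAct, hσ]⟩, ?_, ?_⟩ <;>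
      simp only [doAct, topJ_append_singleton, List.length_append, List.length_dropLast,
        List.length_singleton] <;>
      omega
  | label X =>
    have := Nat.odd_iff.mp happ.1
    exact ⟨⟨l, hσ⟩, htop, by simp only [doAct]; omega⟩
  | nolabel =>
    have := Nat.odd_iff.mp happ.1
    exact ⟨⟨l, hσ⟩, htop, by simp only [doAct]; omega⟩

lemma Valid.wellFormed (h : Valid n c) : WellFormed n c :=
  Relation.ReflTransGen.rec ⟨⟨[], rfl⟩, Nat.zero_le n, by simp [initial, topJ]⟩
    (fun _ hs ih => ih.step hs) h

lemma WellFormed.exists_step (hn : 1 ≤ n) (h : WellFormed n c) (hnf : ¬ Final n c) :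
    ∃ c', Step n c c' := by
  obtain ⟨⟨l, hσ⟩, htop, hcount⟩ := h
  rcases Nat.even_or_odd c.z with heven | hodd
  · have := Nat.even_iff.mp heven
    by_cases hlt : topJ c.σ < n
    · exact ⟨_, .sh, ⟨heven, by simp [hσ], hlt⟩, rfl⟩
    refine ⟨_, .comb, ⟨heven, ?_⟩, rfl⟩
    obtain _ | ⟨x, _ | ⟨y, m⟩⟩ := l
    · simp [hσ, topJ] at hlt
      omega
    · simp only [hσ, topJ, List.getLastD_cons, List.getLastD_nil, List.length_cons,
        List.length_nil] at hlt htop hcount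
      exact absurd ⟨by rw [hσ]; congr; omega, by omega⟩ hnf
    · simp [hσ]
  · have := Nat.odd_iff.mp hodd
    obtain _ | ⟨x, m⟩ := l
    · simp [hσ, topJ] at hcount
      omega
    have hlen : c.σ.length = m.length + 2 := by simp [hσ]
    exact ⟨_, .nolabel, ⟨hodd, by omega, by omega⟩, rfl⟩

lemma dset_subset_card_le : Dset n c ⊆ {t' | t'.card ≤ c.t.card + 4 * n} := by
  rintro _ ⟨c', hreach, ⟨-, hz⟩, rfl⟩
  have := hreach.card_t_add_z_le
  simp only [Set.mem_ofPred_eq]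
  omega

end Steps

lemma WellFormed.exists_reaches_final {n : ℕ} {c : Config N} (hn : 1 ≤ n) (h : WellFormed n c) :
    ∃ c', Reaches n c c' ∧ Final n c' := by
  by_cases hfinal : Final n c
  · exact ⟨c, .refl, hfinal⟩
  obtain ⟨c', hs⟩ := h.exists_step hn hfinal
  have hz := hs.z_eq
  have hbound : c'.z ≤ 4 * n := by
    obtain ⟨⟨l, hσ⟩, htop, hcount⟩ := h.step hs
    have : c'.σ.length = l.length + 1 := by simp [hσ]
    omega
  obtain ⟨c'', hreach, hfinal'⟩ := (h.step hs).exists_reaches_final hn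
  exact ⟨c'', .head hs hreach, hfinal'⟩
termination_by 4 * n - c.z

lemma finite_image_f1_of_card_le (tG : Finset (N × ℕ × ℕ)) (B : ℕ) :
    (f1 tG '' {t' | t'.card ≤ B}).Finite := by
  let F : ℕ × ℕ → ℝ := fun p =>
    if p.1 = 0 then 0
    else (2 * ((p.1 : ℝ) / tG.card) * ((p.1 : ℝ) / p.2)) / ((p.1 : ℝ) / tG.card + (p.1 : ℝ) / p.2)
  refine ((Set.finite_Iic (tG.card, B)).image F).subset ?_
  rintro _ ⟨t', ht', rfl⟩
  refine ⟨((t' ∩ tG).card, t'.card), ⟨Finset.card_le_card Finset.inter_subset_right, ht'⟩, ?_⟩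
  simp only [F, f1, Finset.card_eq_zero]

theorem dset_nonempty_general (n : ℕ) (hn : 1 ≤ n) (tG : Finset (N × ℕ × ℕ))
    (c : Config N) (hc : Valid n c) :
    (Dset n c).Nonempty ∧ ∃ x, IsGreatest (f1 tG '' Dset n c) x := by
  obtain ⟨c', hreach, hfinal⟩ := hc.wellFormed.exists_reaches_final hn
  have hne : (Dset n c).Nonempty := ⟨c'.t, c', hreach, hfinal, rfl⟩
  have hfin : (f1 tG '' Dset n c).Finite :=
    (finite_image_f1_of_card_le tG _).subset (Set.image_mono dset_subset_card_le)
  exact ⟨hne, hfin.isCompact.exists_isGreatest (hne.image _)⟩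

/-- For every valid configuration `c`, the set of reachable trees `D(c)` is
nonempty; in particular `F1(c) = max_{t' ∈ D(c)} F1(t')` is well defined
(the maximum is attained). -/
theorem dset_nonempty (n : ℕ) (hn : 1 ≤ n) (tG : Finset (N × ℕ × ℕ))
    (hG : IsGold n tG) (c : Config N) (hc : Valid n c) :
    (Dset n c).Nonempty ∧ ∃ x, IsGreatest (f1 tG '' Dset n c) x :=
  dset_nonempty_general n hn tG c hc

end SpanParser
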